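/- Let 1 ≤ p < ∞ and let D₁, ..., Dₘ be bounded multiplication operators on L^p(X,μ) with D₁ ⋯ Dₘ = I. Then for every bounded operator A on L^p(X,μ), ‖A‖^m ≤ ‖A D₁‖·‖A D₂‖ ⋯ ‖A Dₘ‖. -/

import Mathlib

open MeasureTheory ENNReal

/-!
Each `Dᵢ` is multiplication by its symbol `dᵢ`, which σ-finiteness makes measurable and essentially
bounded by `‖Dᵢ‖`; since `∏ |dᵢ| = 1`, every `|dᵢ|` is then also bounded below. Replacing `dᵢ` by
`|dᵢ|` composes `Dᵢ` with a contraction, so it suffices to treat positive symbols `tᵢ`.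
For positive `u, v`, Hadamard's three lines theorem applied to `z ↦ A M_u M_{(v/u)^z}` gives
`‖A M_{u^(1-θ) v^θ}‖ ≤ ‖A M_u‖^(1-θ) ‖A M_v‖^θ`, and induction on the number of factors turns
this into `‖A M_{(∏ tᵢ)^(1/m)}‖^m ≤ ∏ ‖A M_{tᵢ}‖`, whose left side is `‖A‖^m`.
-/

theorem Finset.prod_rpow_inv_card_mem_Icc {ι : Type*} {s : Finset ι} (hs : s.Nonempty)
    {f : ι → ℝ} {a b : ℝ} (ha : 0 ≤ a) (hf : ∀ i ∈ s, f i ∈ Set.Icc a b) :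
    (∏ i ∈ s, f i) ^ (s.card : ℝ)⁻¹ ∈ Set.Icc a b := by
  have hcard : s.card ≠ 0 := hs.card_pos.ne'
  have hlow : a ^ s.card ≤ ∏ i ∈ s, f i := by
    simpa using Finset.prod_le_prod (fun _ _ => ha) fun i hi => (hf i hi).1
  have hup : ∏ i ∈ s, f i ≤ b ^ s.card := by
    simpa using Finset.prod_le_prod (fun i hi => ha.trans (hf i hi).1) fun i hi => (hf i hi).2
  obtain ⟨i₀, hi₀⟩ := hs
  have hb : 0 ≤ b := ha.trans ((hf i₀ hi₀).1.trans (hf i₀ hi₀).2)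
  constructor
  · calc a = (a ^ s.card) ^ (s.card : ℝ)⁻¹ := (Real.pow_rpow_inv_natCast ha hcard).symm
      _ ≤ _ := Real.rpow_le_rpow (by positivity) hlow (by positivity)
  · calc _ ≤ (b ^ s.card) ^ (s.card : ℝ)⁻¹ :=
          Real.rpow_le_rpow ((pow_nonneg ha _).trans hlow) hup (by positivity)
      _ = b := Real.pow_rpow_inv_natCast hb hcard

theorem Finset.inv_pow_card_le_of_prod_eq_one {ι : Type*} {s : Finset ι} {f : ι → ℝ} {K : ℝ}
    (hK : 1 ≤ K) (hf0 : ∀ i ∈ s, 0 ≤ f i) (hfK : ∀ i ∈ s, f i ≤ K) (hprod : ∏ i ∈ s, f i = 1)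
    {i : ι} (hi : i ∈ s) : (K ^ s.card)⁻¹ ≤ f i := by
  classical
  have hsplit := Finset.mul_prod_erase s f hi
  rw [hprod] at hsplit
  have hrest_pos : 0 < ∏ j ∈ s.erase i, f j := by
    refine lt_of_le_of_ne (Finset.prod_nonneg fun j hj => hf0 j (Finset.mem_of_mem_erase hj)) ?_
    rintro h
    rw [← h, mul_zero] at hsplit
    exact zero_ne_one hsplit
  have hrest_le : ∏ j ∈ s.erase i, f j ≤ K ^ s.card :=
    calc ∏ j ∈ s.erase i, f j ≤ K ^ (s.erase i).card := by
          simpa using Finset.prod_le_prod (fun j hj => hf0 j (Finset.mem_of_mem_erase hj))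
            fun j hj => hfK j (Finset.mem_of_mem_erase hj)
      _ ≤ K ^ s.card := pow_le_pow_right₀ hK (Finset.card_erase_le)
  rw [eq_inv_of_mul_eq_one_left hsplit]
  exact inv_anti₀ hrest_pos hrest_le

theorem Real.mul_rpow_inv_natCast_succ {a P : ℝ} (ha : 0 ≤ a) (hP : 0 ≤ P) {k : ℕ} (hk : k ≠ 0) :
    (a * P) ^ ((k : ℝ) + 1)⁻¹ = (P ^ (k : ℝ)⁻¹) ^ (1 - ((k : ℝ) + 1)⁻¹) * a ^ ((k : ℝ) + 1)⁻¹ := by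
  have hk' : (k : ℝ) ≠ 0 := Nat.cast_ne_zero.2 hk
  rw [Real.mul_rpow ha hP, ← Real.rpow_mul hP, mul_comm]
  congr 2
  field_simp
  ring

theorem Real.rpow_mul_rpow_pow_succ {x y : ℝ} (hx : 0 ≤ x) (hy : 0 ≤ y) (k : ℕ) :
    (x ^ (1 - ((k : ℝ) + 1)⁻¹) * y ^ ((k : ℝ) + 1)⁻¹) ^ (k + 1) = x ^ k * y := by
  have hk : (k : ℝ) + 1 ≠ 0 := by positivity
  rw [mul_pow, ← Real.rpow_mul_natCast hx, ← Real.rpow_mul_natCast hy]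
  push_cast
  rw [show (1 - ((k : ℝ) + 1)⁻¹) * (k + 1) = k by field_simp; ring, inv_mul_cancel₀ hk,
    Real.rpow_natCast, Real.rpow_one]

theorem ae_mem_Icc_of_prod_eq_one {X ι : Type*} [MeasurableSpace X] {μ : Measure X}
    [Fintype ι] {f : ι → X → ℝ} {K : ℝ} (hK : 1 ≤ K) (hf0 : ∀ i x, 0 ≤ f i x)
    (hfK : ∀ i, ∀ᵐ x ∂μ, f i x ≤ K) (hprod : ∀ᵐ x ∂μ, ∏ i, f i x = 1) (i : ι) :
    ∀ᵐ x ∂μ, f i x ∈ Set.Icc (K ^ Fintype.card ι)⁻¹ K := by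
  filter_upwards [hprod, ae_all_iff.2 hfK] with x hx hxK
  exact ⟨Finset.inv_pow_card_le_of_prod_eq_one hK (fun j _ => hf0 j x) (fun j _ => hxK j) hx
    (Finset.mem_univ i), hxK i⟩

section MulOp

variable {X : Type*} [MeasurableSpace X] {μ : Measure X} {p : ℝ≥0∞} [Fact (1 ≤ p)]

open scoped Classical in
variable (μ p) in
/-- Multiplication by `b` on `L^p`, with the junk value `0` when `b ∉ L^∞`. -/
noncomputable def mulOp (b : X → ℂ) : Lp ℂ p μ →L[ℂ] Lp ℂ p μ :=
  if hb : MemLp b ∞ μ then (ContinuousLinearMap.mul ℂ ℂ).holderL μ ∞ p p (hb.toLp b) else 0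

theorem mulOp_apply_ae_eq {b : X → ℂ} (hb : MemLp b ∞ μ) (f : Lp ℂ p μ) :
    mulOp μ p b f =ᵐ[μ] fun x => b x * f x := by
  rw [mulOp, dif_pos hb]
  filter_upwards [(ContinuousLinearMap.mul ℂ ℂ).coeFn_holder (r := p) (hb.toLp b) f,
    hb.coeFn_toLp] with x hx hbx
  simp [ContinuousLinearMap.holderL_apply_apply, hx, hbx]

theorem eq_mulOp {T : Lp ℂ p μ →L[ℂ] Lp ℂ p μ} {b : X → ℂ} (hb : MemLp b ∞ μ)
    (hT : ∀ f, T f =ᵐ[μ] fun x => b x * f x) : T = mulOp μ p b :=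
  ContinuousLinearMap.ext fun f => Lp.ext ((hT f).trans (mulOp_apply_ae_eq hb f).symm)

theorem norm_mulOp_le {b : X → ℂ} {C : ℝ} (hb : AEStronglyMeasurable b μ)
    (hC : ∀ᵐ x ∂μ, ‖b x‖ ≤ C) (hC0 : 0 ≤ C) : ‖mulOp μ p b‖ ≤ C := by
  refine ContinuousLinearMap.opNorm_le_bound _ hC0 fun f => ?_
  refine Lp.norm_le_mul_norm_of_ae_le_mul ?_
  filter_upwards [mulOp_apply_ae_eq (memLp_top_of_bound hb C hC) f, hC] with x hx hCx
  rw [hx, norm_mul]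
  exact mul_le_mul_of_nonneg_right hCx (norm_nonneg _)

theorem mulOp_congr {b c : X → ℂ} (h : b =ᵐ[μ] c) : mulOp μ p b = mulOp μ p c := by
  by_cases hb : MemLp b ∞ μ
  · refine eq_mulOp (hb.ae_eq h) fun f => ?_
    filter_upwards [mulOp_apply_ae_eq hb f, h] with x hx hbc
    rw [hx, hbc]
  · rw [mulOp, mulOp, dif_neg hb, dif_neg fun hc => hb (hc.ae_eq h.symm)]

theorem mulOp_one : mulOp μ p (fun _ => (1 : ℂ)) = ContinuousLinearMap.id ℂ (Lp ℂ p μ) :=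
  (eq_mulOp (memLp_top_const 1) fun f => by simp).symm

theorem mulOp_mul {b c : X → ℂ} (hb : MemLp b ∞ μ) (hc : MemLp c ∞ μ) :
    mulOp μ p (fun x => b x * c x) = (mulOp μ p b).comp (mulOp μ p c) := by
  refine (eq_mulOp (hc.mul hb) fun f => ?_).symm
  filter_upwards [mulOp_apply_ae_eq hb (mulOp μ p c f), mulOp_apply_ae_eq hc f] with x hb hc
  simp [hb, hc, mul_assoc]

theorem mulOp_sub {b c : X → ℂ} (hb : MemLp b ∞ μ) (hc : MemLp c ∞ μ) :
    mulOp μ p (fun x => b x - c x) = mulOp μ p b - mulOp μ p c := by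
  have hbc : MemLp (fun x => b x - c x) ∞ μ := hb.sub hc
  rw [mulOp, mulOp, mulOp, dif_pos hb, dif_pos hc, dif_pos hbc, ← map_sub]
  rfl

theorem mulOp_const_mul (a : ℂ) {b : X → ℂ} (hb : MemLp b ∞ μ) :
    mulOp μ p (fun x => a * b x) = a • mulOp μ p b := by
  rw [mulOp, mulOp, dif_pos hb, dif_pos (hb.const_mul a), ← map_smul]
  rfl

theorem aestronglyMeasurable_of_ae_eq_mul [SigmaFinite μ] {T : Lp ℂ p μ →L[ℂ] Lp ℂ p μ}
    {d : X → ℂ} (hT : ∀ f, T f =ᵐ[μ] fun x => d x * f x) : AEStronglyMeasurable d μ := by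
  rw [← Measure.restrict_univ (μ := μ), ← iUnion_spanningSets μ, aestronglyMeasurable_iUnion_iff]
  intro n
  have hS := measurableSet_spanningSets μ n
  let f := indicatorConstLp p hS (measure_spanningSets_lt_top μ n).ne (1 : ℂ)
  have hf : ∀ᵐ x ∂μ, x ∈ spanningSets μ n → f x = 1 := indicatorConstLp_coeFn_mem
  refine (Lp.aestronglyMeasurable (T f)).restrict.congr ?_
  filter_upwards [ae_restrict_of_ae (hT f), ae_restrict_of_ae hf, ae_restrict_mem hS]
    with x hTf hfx hx
  rw [hTf, hfx hx, mul_one]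

theorem ae_norm_le_opNorm_of_ae_eq_mul [SigmaFinite μ] {T : Lp ℂ p μ →L[ℂ] Lp ℂ p μ}
    {d : X → ℂ} (hT : ∀ f, T f =ᵐ[μ] fun x => d x * f x) : ∀ᵐ x ∂μ, ‖d x‖ ≤ ‖T‖ := by
  have hd := aestronglyMeasurable_of_ae_eq_mul hT
  suffices h : ∀ᵐ x ∂μ, ‖hd.mk d x‖ ≤ ‖T‖ by
    filter_upwards [h, hd.ae_eq_mk] with x hx hdx
    rwa [hdx]
  rw [ae_le_const_iff_forall_gt_measure_zero]
  intro c hc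
  by_contra hμ
  obtain ⟨t, ht, hts, hμt, hμt_top⟩ := Measure.exists_subset_measure_lt_top
    (measurableSet_le measurable_const hd.stronglyMeasurable_mk.measurable.norm)
    (pos_iff_ne_zero.2 hμ)
  let f := indicatorConstLp p ht hμt_top.ne (1 : ℂ)
  have hp0 : p ≠ 0 := (zero_lt_one.trans_le Fact.out).ne'
  have hf : 0 < ‖f‖ := by
    rw [norm_indicatorConstLp' hp0 hμt.ne', norm_one, one_mul]
    exact Real.rpow_pos_of_pos (ENNReal.toReal_pos hμt.ne' hμt_top.ne) _
  have hc0 : 0 < c := (norm_nonneg T).trans_lt hc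
  have hf_ind : f =ᵐ[μ] t.indicator fun _ => (1 : ℂ) := indicatorConstLp_coeFn
  have hfT : ‖f‖ ≤ c⁻¹ * ‖T f‖ := by
    refine Lp.norm_le_mul_norm_of_ae_le_mul ?_
    filter_upwards [hT f, hd.ae_eq_mk, hf_ind] with x hTf hdx hfx
    rw [hTf, hfx, hdx]
    by_cases hxt : x ∈ t
    · rw [Set.indicator_of_mem hxt, norm_mul, norm_one, mul_one, inv_mul_eq_div,
        le_div_iff₀ hc0, one_mul]
      exact hts hxt
    · simp [Set.indicator_of_notMem hxt]
  have : ‖f‖ < ‖f‖ :=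
    calc ‖f‖ ≤ c⁻¹ * ‖T f‖ := hfT
      _ ≤ c⁻¹ * (‖T‖ * ‖f‖) := by gcongr; exact T.le_opNorm f
      _ < c⁻¹ * (c * ‖f‖) := by gcongr
      _ = ‖f‖ := by field_simp
  exact lt_irrefl _ this

theorem ae_norm_cexp_mul_le {w : X → ℂ} {W : ℝ} (hW : ∀ᵐ x ∂μ, ‖w x‖ ≤ W) (z : ℂ) :
    ∀ᵐ x ∂μ, ‖Complex.exp (z * w x)‖ ≤ Real.exp (‖z‖ * W) := by
  filter_upwards [hW] with x hx
  rw [Complex.norm_exp]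
  refine Real.exp_le_exp.2 ((Complex.re_le_norm _).trans ?_)
  rw [norm_mul]
  exact mul_le_mul_of_nonneg_left hx (norm_nonneg z)

theorem memLp_top_cexp_mul {w : X → ℂ} (hw : AEStronglyMeasurable w μ) {W : ℝ}
    (hW : ∀ᵐ x ∂μ, ‖w x‖ ≤ W) (z : ℂ) : MemLp (fun x => Complex.exp (z * w x)) ∞ μ :=
  memLp_top_of_bound (Complex.continuous_exp.comp_aestronglyMeasurable (hw.const_mul z)) _
    (ae_norm_cexp_mul_le hW z)

theorem mulOp_cexp_add_mul {w : X → ℂ} (hw : AEStronglyMeasurable w μ) {W : ℝ}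
    (hW : ∀ᵐ x ∂μ, ‖w x‖ ≤ W) (z₁ z₂ : ℂ) :
    mulOp μ p (fun x => Complex.exp ((z₁ + z₂) * w x)) =
      mulOp μ p (fun x => Complex.exp (z₁ * w x)) ∘L
        mulOp μ p (fun x => Complex.exp (z₂ * w x)) := by
  rw [← mulOp_mul (memLp_top_cexp_mul hw hW z₁) (memLp_top_cexp_mul hw hW z₂)]
  simp only [add_mul, Complex.exp_add]

theorem hasDerivAt_mulOp_cexp {w : X → ℂ} (hw : AEStronglyMeasurable w μ) {W : ℝ}
    (hW : ∀ᵐ x ∂μ, ‖w x‖ ≤ W) (z : ℂ) :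
    HasDerivAt (fun z => mulOp μ p fun x => Complex.exp (z * w x))
      (mulOp μ p fun x => w x * Complex.exp (z * w x)) z := by
  have hmem := memLp_top_cexp_mul hw hW
  have hderiv_mem : MemLp (fun x => w x * Complex.exp (z * w x)) ∞ μ :=
    (hmem z).mul (memLp_top_of_bound hw W hW)
  rw [hasDerivAt_iff_isLittleO_nhds_zero]
  refine Asymptotics.IsBigO.trans_isLittleO ?_ (Asymptotics.isLittleO_pow_id one_lt_two)
  refine Asymptotics.IsBigO.of_bound (Real.exp (‖z‖ * W) * W ^ 2) ?_
  filter_upwards [Metric.ball_mem_nhds (0 : ℂ) (by positivity : (0 : ℝ) < 1 / (|W| + 1))]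
    with h hh
  have hhW : ‖h‖ * W ≤ 1 := by
    rw [mem_ball_zero_iff, lt_div_iff₀ (by positivity)] at hh
    nlinarith [le_abs_self W, norm_nonneg h]
  have hrem : (mulOp μ p fun x => Complex.exp ((z + h) * w x)) - (mulOp μ p fun x =>
      Complex.exp (z * w x)) - h • (mulOp μ p fun x => w x * Complex.exp (z * w x)) =
      mulOp μ p fun x => Complex.exp (z * w x) * (Complex.exp (h * w x) - 1 - h * w x) := by
    rw [← mulOp_sub (hmem _) (hmem z), ← mulOp_const_mul h hderiv_mem, ← mulOp_sub]
    · congr 1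
      funext x
      rw [add_mul, Complex.exp_add]
      ring
    · exact (hmem _).sub (hmem z)
    · exact hderiv_mem.const_mul h
  rw [hrem, norm_pow, mul_assoc]
  refine norm_mulOp_le ?_ ?_ (by positivity)
  · exact (hmem z).1.mul ((((hmem h).1).sub aestronglyMeasurable_const).sub (hw.const_mul h))
  filter_upwards [ae_norm_cexp_mul_le hW z, hW] with x hexp hx
  have hhw : ‖h * w x‖ ≤ ‖h‖ * W := by
    rw [norm_mul]; exact mul_le_mul_of_nonneg_left hx (norm_nonneg h)
  rw [norm_mul]
  refine mul_le_mul hexp ?_ (norm_nonneg _) (Real.exp_pos _).le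
  calc ‖Complex.exp (h * w x) - 1 - h * w x‖ ≤ ‖h * w x‖ ^ 2 :=
        Complex.norm_exp_sub_one_sub_id_le (hhw.trans hhW)
    _ ≤ (‖h‖ * W) ^ 2 := pow_le_pow_left₀ (norm_nonneg _) hhw 2
    _ = W ^ 2 * ‖h‖ ^ 2 := by ring

theorem memLp_top_ofReal_of_mem_Icc {u : X → ℝ} (hu : AEMeasurable u μ) {ε K : ℝ} (hε : 0 < ε)
    (hu_mem : ∀ᵐ x ∂μ, u x ∈ Set.Icc ε K) : MemLp (fun x => (u x : ℂ)) ∞ μ := by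
  refine memLp_top_of_bound
    (Complex.measurable_ofReal.comp_aemeasurable hu).aestronglyMeasurable K ?_
  filter_upwards [hu_mem] with x hx
  rw [Complex.norm_real, Real.norm_of_nonneg (hε.le.trans hx.1)]
  exact hx.2

theorem norm_mulOp_cexp_le {w : X → ℝ} (hw : AEMeasurable w μ) {z : ℂ} {c : ℝ}
    (hc : ∀ᵐ x ∂μ, z.re * w x ≤ c) : ‖mulOp μ p fun x => Complex.exp (z * w x)‖ ≤ Real.exp c := by
  refine norm_mulOp_le ?_ ?_ (Real.exp_pos c).le
  · exact Complex.continuous_exp.comp_aestronglyMeasurable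
      ((Complex.measurable_ofReal.comp_aemeasurable hw).aestronglyMeasurable.const_mul z)
  filter_upwards [hc] with x hx
  rw [Complex.norm_exp, Complex.re_mul_ofReal]
  exact Real.exp_le_exp.2 hx

theorem norm_comp_mulOp_cexp_le {w : X → ℝ} (hw : AEMeasurable w μ) {W : ℝ}
    (hW : ∀ᵐ x ∂μ, |w x| ≤ W) (B : Lp ℂ p μ →L[ℂ] Lp ℂ p μ) {θ : ℝ}
    (hθ : θ ∈ Set.Icc (0 : ℝ) 1) :
    ‖B ∘L mulOp μ p (fun x => Complex.exp (θ * w x))‖ ≤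
      ‖B‖ ^ (1 - θ) * ‖B ∘L mulOp μ p (fun x => Complex.exp (w x))‖ ^ θ := by
  have hw' : AEStronglyMeasurable (fun x => (w x : ℂ)) μ :=
    (Complex.measurable_ofReal.comp_aemeasurable hw).aestronglyMeasurable
  have hW' : ∀ᵐ x ∂μ, ‖(w x : ℂ)‖ ≤ W := by
    filter_upwards [hW] with x hx; rwa [Complex.norm_real]
  set E : ℂ → Lp ℂ p μ →L[ℂ] Lp ℂ p μ := fun z => mulOp μ p fun x => Complex.exp (z * w x)
  have hE_one : ∀ z : ℂ, z.re = 0 → ‖E z‖ ≤ 1 := fun z hz => by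
    simpa using norm_mulOp_cexp_le (p := p) hw (z := z) (c := 0) (by simp [hz])
  have hE_add : ∀ z, E z = E 1 ∘L E (z - 1) := fun z => by
    simpa [E] using mulOp_cexp_add_mul (p := p) hw' hW' 1 (z - 1)
  set F : ℂ → Lp ℂ p μ →L[ℂ] Lp ℂ p μ := fun z => B ∘L E z
  have hF_le : ∀ z : ℂ, ‖F z‖ ≤ ‖B‖ * ‖E z‖ := fun z => ContinuousLinearMap.opNorm_comp_le _ _
  have h3 := Complex.HadamardThreeLines.norm_le_interp_of_mem_verticalClosedStrip₀₁' F
    (z := θ) (a := ‖B‖) (b := ‖B ∘L E 1‖)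
    (by simpa [Complex.HadamardThreeLines.verticalClosedStrip] using hθ)
    ((differentiable_const _).clm_comp fun z =>
      (hasDerivAt_mulOp_cexp hw' hW' z).differentiableAt).diffContOnCl
    ⟨‖B‖ * Real.exp W, by
      rintro _ ⟨z, ⟨h0, h1⟩, rfl⟩
      refine (hF_le z).trans
        (mul_le_mul_of_nonneg_left (norm_mulOp_cexp_le hw ?_) (norm_nonneg _))
      filter_upwards [hW] with x hx
      rw [abs_le] at hx
      nlinarith [mul_nonneg (sub_nonneg.2 h1) (by linarith : 0 ≤ W),
        mul_nonneg h0 (by linarith : 0 ≤ W - w x)]⟩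
    (fun z hz => (hF_le z).trans (mul_le_of_le_one_right (norm_nonneg _) (hE_one z hz)))
    (fun z hz => by
      have hz : z.re = 1 := hz
      simp only [F]
      rw [hE_add z, ← ContinuousLinearMap.comp_assoc]
      exact (ContinuousLinearMap.opNorm_comp_le _ _).trans
        (mul_le_of_le_one_right (norm_nonneg _) (hE_one (z - 1) (by simp [hz]))))
  simpa [F, E] using h3

theorem norm_comp_mulOp_rpow_mul_rpow_le {u v : X → ℝ} (hu : AEMeasurable u μ)
    (hv : AEMeasurable v μ) {ε K : ℝ} (hε : 0 < ε) (hu_mem : ∀ᵐ x ∂μ, u x ∈ Set.Icc ε K)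
    (hv_mem : ∀ᵐ x ∂μ, v x ∈ Set.Icc ε K) {θ : ℝ} (hθ : θ ∈ Set.Icc (0 : ℝ) 1)
    (A : Lp ℂ p μ →L[ℂ] Lp ℂ p μ) :
    ‖A ∘L mulOp μ p (fun x => ((u x ^ (1 - θ) * v x ^ θ : ℝ) : ℂ))‖ ≤
      ‖A ∘L mulOp μ p (fun x => (u x : ℂ))‖ ^ (1 - θ) *
        ‖A ∘L mulOp μ p (fun x => (v x : ℂ))‖ ^ θ := by
  set w : X → ℝ := fun x => Real.log (v x) - Real.log (u x)
  have hwW : ∀ᵐ x ∂μ, |w x| ≤ Real.log K - Real.log ε := by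
    filter_upwards [hu_mem, hv_mem] with x hux hvx
    have := Real.log_le_log hε hux.1
    have := Real.log_le_log hε hvx.1
    have := Real.log_le_log (hε.trans_le hux.1) hux.2
    have := Real.log_le_log (hε.trans_le hvx.1) hvx.2
    rw [abs_le]; constructor <;> linarith
  have hw : AEMeasurable w μ :=
    (Real.measurable_log.comp_aemeasurable hv).sub (Real.measurable_log.comp_aemeasurable hu)
  have hu' := memLp_top_ofReal_of_mem_Icc hu hε hu_mem
  have hE_mem := memLp_top_cexp_mul (w := fun x => (w x : ℂ)) (W := Real.log K - Real.log ε)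
    (Complex.measurable_ofReal.comp_aemeasurable hw).aestronglyMeasurable
    (by filter_upwards [hwW] with x hx; rwa [Complex.norm_real])
  have hθ_symbol : mulOp μ p (fun x => ((u x ^ (1 - θ) * v x ^ θ : ℝ) : ℂ)) =
      mulOp μ p (fun x => (u x : ℂ) * Complex.exp (θ * w x)) := by
    refine mulOp_congr ?_
    filter_upwards [hu_mem, hv_mem] with x hux hvx
    have hu0 := hε.trans_le hux.1
    have : u x ^ (1 - θ) * v x ^ θ = u x * Real.exp (θ * w x) := by
      rw [Real.rpow_def_of_pos hu0, Real.rpow_def_of_pos (hε.trans_le hvx.1), ← Real.exp_add,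
        show Real.log (u x) * (1 - θ) + Real.log (v x) * θ = Real.log (u x) + θ * w x by ring]
      rw [Real.exp_add, Real.exp_log hu0]
    exact_mod_cast this
  have hv_symbol : mulOp μ p (fun x => (v x : ℂ)) =
      mulOp μ p (fun x => (u x : ℂ) * Complex.exp (w x)) := by
    refine mulOp_congr ?_
    filter_upwards [hu_mem, hv_mem] with x hux hvx
    have : v x = u x * Real.exp (w x) := by
      rw [Real.exp_sub, Real.exp_log (hε.trans_le hvx.1), Real.exp_log (hε.trans_le hux.1),
        mul_div_cancel₀ _ (hε.trans_le hux.1).ne']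
    exact_mod_cast this
  rw [hθ_symbol, hv_symbol, mulOp_mul hu' (hE_mem θ), mulOp_mul hu' (by simpa using hE_mem 1)]
  simpa only [ContinuousLinearMap.comp_assoc] using
    norm_comp_mulOp_cexp_le hw hwW (A ∘L mulOp μ p (fun x => (u x : ℂ))) hθ

theorem norm_comp_mulOp_norm_le {b : X → ℂ} (hb : MemLp b ∞ μ) (A : Lp ℂ p μ →L[ℂ] Lp ℂ p μ) :
    ‖A ∘L mulOp μ p (fun x => (‖b x‖ : ℂ))‖ ≤ ‖A ∘L mulOp μ p b‖ := by
  set σ : X → ℂ := fun x => (‖b x‖ : ℂ) / b x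
  have hσ_le : ∀ x, ‖σ x‖ ≤ 1 := fun x => by
    by_cases h : b x = 0 <;> simp [σ, h]
  have hσ : AEStronglyMeasurable σ μ :=
    ((Complex.measurable_ofReal.comp_aemeasurable hb.1.aemeasurable.norm).div
      hb.1.aemeasurable).aestronglyMeasurable
  have hbσ : mulOp μ p (fun x => (‖b x‖ : ℂ)) = mulOp μ p b ∘L mulOp μ p σ := by
    rw [← mulOp_mul hb (memLp_top_of_bound hσ 1 (.of_forall hσ_le))]
    congr 1
    funext x
    rcases eq_or_ne (b x) 0 with h | h
    · simp [σ, h]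
    · exact (mul_div_cancel₀ _ h).symm
  rw [hbσ, ← ContinuousLinearMap.comp_assoc]
  exact (ContinuousLinearMap.opNorm_comp_le _ _).trans
    (mul_le_of_le_one_right (norm_nonneg _) (norm_mulOp_le hσ (.of_forall hσ_le) zero_le_one))

theorem norm_comp_mulOp_prod_rpow_pow_le {ι : Type*} {t : ι → X → ℝ}
    (ht : ∀ i, AEMeasurable (t i) μ) {ε K : ℝ} (hε : 0 < ε) (A : Lp ℂ p μ →L[ℂ] Lp ℂ p μ)
    {s : Finset ι} (hs : s.Nonempty) (ht_mem : ∀ i ∈ s, ∀ᵐ x ∂μ, t i x ∈ Set.Icc ε K) :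
    ‖A ∘L mulOp μ p (fun x => (((∏ i ∈ s, t i x) ^ (s.card : ℝ)⁻¹ : ℝ) : ℂ))‖ ^ s.card ≤
      ∏ i ∈ s, ‖A ∘L mulOp μ p (fun x => (t i x : ℂ))‖ := by
  induction hs using Finset.Nonempty.cons_induction with
  | singleton a => simp
  | cons a s ha hs ih =>
    simp only [Finset.forall_mem_cons] at ht_mem
    set u : X → ℝ := fun x => (∏ i ∈ s, t i x) ^ (s.card : ℝ)⁻¹
    have hu : AEMeasurable u μ := (Finset.aemeasurable_fun_prod s fun i _ => ht i).pow_const _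
    have hu_mem : ∀ᵐ x ∂μ, u x ∈ Set.Icc ε K := by
      filter_upwards [(ae_ball_iff s.countable_toSet).2 ht_mem.2] with x hx
      exact Finset.prod_rpow_inv_card_mem_Icc hs hε.le hx
    set θ : ℝ := ((s.card : ℝ) + 1)⁻¹
    have hsymbol : mulOp μ p (fun x =>
        (((∏ i ∈ Finset.cons a s ha, t i x) ^ ((Finset.cons a s ha).card : ℝ)⁻¹ : ℝ) : ℂ)) =
        mulOp μ p (fun x => ((u x ^ (1 - θ) * t a x ^ θ : ℝ) : ℂ)) := by
      refine mulOp_congr ?_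
      filter_upwards [ht_mem.1, (ae_ball_iff s.countable_toSet).2 ht_mem.2] with x hax hx
      rw [Finset.prod_cons, Finset.card_cons, Nat.cast_succ,
        Real.mul_rpow_inv_natCast_succ (hε.le.trans hax.1)
          (Finset.prod_nonneg fun i hi => hε.le.trans (hx i hi).1) hs.card_pos.ne']
    have hθ : θ ∈ Set.Icc (0 : ℝ) 1 := ⟨by positivity, inv_le_one_of_one_le₀ (by simp)⟩
    rw [hsymbol, Finset.card_cons, Finset.prod_cons, mul_comm]
    calc _ ≤ (‖A ∘L mulOp μ p (fun x => (u x : ℂ))‖ ^ (1 - θ) *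
          ‖A ∘L mulOp μ p (fun x => (t a x : ℂ))‖ ^ θ) ^ (s.card + 1) :=
          pow_le_pow_left₀ (norm_nonneg _)
            (norm_comp_mulOp_rpow_mul_rpow_le hu (ht a) hε hu_mem ht_mem.1 hθ A) _
      _ = ‖A ∘L mulOp μ p (fun x => (u x : ℂ))‖ ^ s.card *
          ‖A ∘L mulOp μ p (fun x => (t a x : ℂ))‖ :=
          Real.rpow_mul_rpow_pow_succ (norm_nonneg _) (norm_nonneg _) _
      _ ≤ _ := mul_le_mul_of_nonneg_right (ih ht_mem.2) (norm_nonneg _)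

end MulOp

theorem norm_pow_le_prod_norm_mul_right
    {X : Type*} [MeasurableSpace X] (μ : Measure X) [SigmaFinite μ]
    (p : ℝ≥0∞) [Fact (1 ≤ p)] (m : ℕ)
    (D : Fin m → (Lp ℂ p μ →L[ℂ] Lp ℂ p μ)) (d : Fin m → X → ℂ)
    (hD : ∀ i, ∀ f : Lp ℂ p μ, (D i f : X → ℂ) =ᵐ[μ] fun x => d i x * f x)
    (hprod : (fun x => ∏ i, d i x) =ᵐ[μ] fun _ => 1)
    (A : Lp ℂ p μ →L[ℂ] Lp ℂ p μ) :
    ‖A‖ ^ m ≤ ∏ i, ‖A.comp (D i)‖ := by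
  obtain rfl | hm := Nat.eq_zero_or_pos m
  · simp
  have : NeZero m := ⟨hm.ne'⟩
  have hd_meas i := aestronglyMeasurable_of_ae_eq_mul (hD i)
  have hd_mem i : MemLp (d i) ∞ μ :=
    memLp_top_of_bound (hd_meas i) _ (ae_norm_le_opNorm_of_ae_eq_mul (hD i))
  obtain ⟨M, hM⟩ := Finite.exists_le fun i => ‖D i‖
  have hprod' : ∀ᵐ x ∂μ, ∏ i, ‖d i x‖ = 1 := by
    filter_upwards [hprod] with x hx
    rw [← norm_prod, hx, norm_one]
  have ht_mem := ae_mem_Icc_of_prod_eq_one (le_max_left 1 M) (fun i x => norm_nonneg (d i x))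
    (fun i => (ae_norm_le_opNorm_of_ae_eq_mul (hD i)).mono fun x hx =>
      hx.trans ((hM i).trans (le_max_right 1 M))) hprod'
  have key := norm_comp_mulOp_prod_rpow_pow_le (t := fun i x => ‖d i x‖)
    (fun i => (hd_meas i).norm.aemeasurable) (by positivity) A Finset.univ_nonempty
    fun i _ => ht_mem i
  have hone : mulOp μ p (fun x => (((∏ i, ‖d i x‖) ^ (Fintype.card (Fin m) : ℝ)⁻¹ : ℝ) : ℂ)) =
      ContinuousLinearMap.id ℂ (Lp ℂ p μ) := by
    rw [← mulOp_one]
    exact mulOp_congr (hprod'.mono fun x hx => by simp [hx])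
  rw [Finset.card_univ, hone, ContinuousLinearMap.comp_id, Fintype.card_fin] at key
  refine key.trans (Finset.prod_le_prod (fun i _ => norm_nonneg _) fun i _ => ?_)
  rw [eq_mulOp (hd_mem i) (hD i)]
  exact norm_comp_mulOp_norm_le (hd_mem i) A
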